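/- Let G be a group, K a central subgroup of G generated by an element f, and suppose additionally that for the quotient map s : G → G/K, whenever an element g of G has s(g) ≠ 1, the centralizer of s(g) in G/K is cyclic. If τ ∈ G with s(τ) ≠ 1 and f^n τ is conjugate to τ in G for some integer n, then f^n = 1. -/

import Mathlib

/-! The conjugator `c` with `c (fⁿ τ) c⁻¹ = τ` maps into the centralizer of `s τ`, which is cyclic.
The preimage of a cyclic subgroup under a central quotient map is abelian, so `c` commutes with `τ`
in `G` itself, and then `fⁿ τ = c (fⁿ τ) c⁻¹ = τ`. -/

open Subgroup QuotientGroup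

theorem commute_of_mk_mem_of_isCyclic {G : Type*} [Group G] {K : Subgroup G} [K.Normal]
    (hK : K ≤ center G) (C : Subgroup (G ⧸ K)) [IsCyclic C] {a b : G}
    (ha : (a : G ⧸ K) ∈ C) (hb : (b : G ⧸ K) ∈ C) : Commute a b := by
  have hker : ((mk' K).subgroupComap C).ker ≤ center (C.comap (mk' K)) := by
    intro x hx
    have hxK : (x : G) ∈ K := (eq_one_iff _).1 (congrArg Subtype.val hx)
    exact mem_center_iff.2 fun y => Subtype.ext (mem_center_iff.1 (hK hxK) y)
  exact congrArg Subtype.val <|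
    ((mk' K).subgroupComap C).isMulCommutative_of_isCyclic_of_ker_le_center hker |>.is_comm.comm
      (⟨a, ha⟩ : C.comap (mk' K)) ⟨b, hb⟩

theorem mk_mem_centralizer_of_conj_mul_eq {G : Type*} [Group G] {K : Subgroup G} [K.Normal]
    {k c a : G} (hk : k ∈ K) (hc : c * (k * a) * c⁻¹ = a) :
    (c : G ⧸ K) ∈ centralizer {(a : G ⧸ K)} := by
  have hc' := congrArg ((↑) : G → G ⧸ K) hc
  simp only [mk_mul, mk_inv, (eq_one_iff k).2 hk, one_mul] at hc'
  exact mem_centralizer_singleton_iff.2 (mul_inv_eq_iff_eq_mul.1 hc')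

/-- If `f` is central, `K = ⟨f⟩`, `s : G → G/K` the quotient, and the centralizer of every
nontrivial element of `G/K` is cyclic, then for `τ` with `s τ ≠ 1`, if `fⁿτ` is conjugate
to `τ` then `fⁿ = 1`. -/
theorem stmt_4 {G : Type*} [Group G] (f : G) (hf : f ∈ Subgroup.center G)
    [hN : (Subgroup.zpowers f).Normal]
    (hcent : ∀ g : G ⧸ Subgroup.zpowers f, g ≠ 1 → IsCyclic (Subgroup.centralizer {g}))
    (τ : G) (hτ : QuotientGroup.mk' (Subgroup.zpowers f) τ ≠ 1)
    (n : ℤ) (hconj : IsConj (f ^ n * τ) τ) : f ^ n = 1 := by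
  obtain ⟨c, hc⟩ := isConj_iff.1 hconj
  have := hcent (τ : G ⧸ zpowers f) hτ
  have hcτ : Commute c τ :=
    commute_of_mk_mem_of_isCyclic (zpowers_le.2 hf) _
      (mk_mem_centralizer_of_conj_mul_eq (zpow_mem_zpowers f n) hc)
      (mem_centralizer_singleton_iff.2 rfl)
  have hfc : Commute (f ^ n) c := mem_center_iff.1 (zpow_mem hf n) c |>.symm
  rw [← mul_eq_right (b := τ)]
  calc f ^ n * τ = f ^ n * (c * τ * c⁻¹) := by rw [hcτ.mul_inv_cancel]
    _ = c * (f ^ n * τ) * c⁻¹ := by rw [← mul_assoc, ← mul_assoc, hfc.eq]; simp only [mul_assoc]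
    _ = τ := hc
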